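/- arXiv:1302.1329 — 3 statements merged into one kernel-verified Lean document; each statement's English description precedes it below -/
import Mathlib

section
/- Let N = 2k+1 and α_0 = (k-1, k-2, …, 2, 1) the staircase partition. Then for all i, j ∈ {0,…,N-1}, the partitions α_i = τ^i(α_0) satisfy d(α_i, α_j) = 2·min(|j-i|, N-|j-i|); that is, the orbit of the staircase under τ forms an N-cycle metric space with edge length 2. -/
/-!
Away from the boundary, `τ` is an isometry for `d`: for partitions `λ, μ` of lengths `< N - 1`,
removing the first column lowers `d` by exactly `|ℓ(λ) - ℓ(μ)|`, and that is the difference of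
the new first rows `N - 1 - ℓ(λ)` and `N - 1 - ℓ(μ)`. Hence `d(α_i, α_j) = d(α_0, α_{j-i})`.

The orbit `α_r` is then computed explicitly (`alpha`): every `α_r` contains `α_0`, so
`d(α_0, α_r) = |α_r| - |α_0|`, and each step changes the size by `N - 1 - 2ℓ(α_r)`, which is `2`
while `r < k`, `0` at `r = k` and `-2` afterwards.
-/

def dP (l m : List ℕ) : ℤ :=
  (l.sum : ℤ) + (m.sum : ℤ) - 2 * ((l.zipWith min m).sum : ℤ)

def tauP (N : ℕ) (l : List ℕ) : List ℕ :=
  ((N - l.length - 1) :: l.map (· - 1)).filter (fun x => decide (0 < x))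

/-- The staircase partition (m, m-1, …, 2, 1). -/
def staircase (m : ℕ) : List ℕ := (List.range m).map (fun i => m - i)

@[simp] lemma dP_nil_left (m : List ℕ) : dP [] m = m.sum := by simp [dP]

@[simp] lemma dP_nil_right (l : List ℕ) : dP l [] = l.sum := by simp [dP]

lemma dP_cons (a b : ℕ) (l m : List ℕ) :
    dP (a :: l) (b :: m) = ((a : ℤ) - b).natAbs + dP l m := by
  simp only [dP, List.sum_cons, List.zipWith_cons_cons, Nat.cast_add]
  omega

lemma dP_comm (l m : List ℕ) : dP l m = dP m l := by
  rw [dP, dP, List.zipWith_comm_of_comm min_comm]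
  ring

lemma dP_replicate_zero_left (t : ℕ) (m : List ℕ) : dP (List.replicate t 0) m = m.sum := by
  induction t generalizing m with
  | zero => simp
  | succ t ih => cases m <;> simp [List.replicate_succ, dP_cons, ih]

lemma dP_append_replicate_zero (l m : List ℕ) (t : ℕ) :
    dP (l ++ List.replicate t 0) m = dP l m := by
  induction l generalizing m with
  | nil => simp [dP_replicate_zero_left]
  | cons a l ih => cases m <;> simp_all [dP_cons]

lemma sum_map_sub_one {l : List ℕ} (hl : 0 ∉ l) :
    (((l.map (· - 1)).sum : ℕ) : ℤ) = l.sum - l.length := by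
  induction l with
  | nil => simp
  | cons a l ih =>
    simp only [List.mem_cons, not_or] at hl
    simp only [List.map_cons, List.sum_cons, List.length_cons, Nat.cast_add, ih hl.2]
    omega

lemma dP_map_sub_one {l m : List ℕ} (hl : 0 ∉ l) (hm : 0 ∉ m) :
    dP (l.map (· - 1)) (m.map (· - 1)) = dP l m - ((l.length : ℤ) - m.length).natAbs := by
  induction l generalizing m with
  | nil =>
    simp only [List.map_nil, dP_nil_left, sum_map_sub_one hm, List.length_nil, Nat.cast_zero]
    omega
  | cons a l ih =>
    cases m with
    | nil =>
      simp only [List.map_nil, dP_nil_right, sum_map_sub_one hl, List.length_nil, Nat.cast_zero]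
      omega
    | cons b m =>
      simp only [List.mem_cons, not_or] at hl hm
      simp only [List.map_cons, dP_cons, ih hl.2 hm.2, List.length_cons]
      omega

lemma zipWith_min_eq_left {l m : List ℕ} (hlen : l.length ≤ m.length)
    (h : ∀ i (hl : i < l.length) (hm : i < m.length), l[i] ≤ m[i]) : l.zipWith min m = l :=
  List.ext_getElem (by simpa using hlen) fun i _ hl => by simpa using h i hl (by omega)

lemma dP_eq_sub_of_zipWith_min_eq {l m : List ℕ} (h : l.zipWith min m = l) :
    dP l m = m.sum - l.sum := by
  rw [dP, h]
  ring

lemma sum_filter_pos (l : List ℕ) : (l.filter (0 < ·)).sum = l.sum := by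
  induction l with
  | nil => rfl
  | cons a l ih => rcases Nat.eq_zero_or_pos a with rfl | ha <;> simp [*]

lemma exists_eq_filter_pos_append_replicate_zero {l : List ℕ} (hl : l.Pairwise (· ≥ ·)) :
    ∃ t, l = l.filter (0 < ·) ++ List.replicate t 0 := by
  induction l with
  | nil => exact ⟨0, rfl⟩
  | cons a l ih =>
    rw [List.pairwise_cons] at hl
    rcases Nat.eq_zero_or_pos a with rfl | ha
    · have hl0 : l = List.replicate l.length 0 :=
        List.eq_replicate_iff.2 ⟨rfl, fun b hb => Nat.le_zero.1 (hl.1 b hb)⟩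
      exact ⟨l.length + 1, by rw [hl0]; simp [List.replicate_succ]⟩
    · obtain ⟨t, ht⟩ := ih hl.2
      exact ⟨t, by rw [List.filter_cons_of_pos (by simpa), List.cons_append, ← ht]⟩

lemma dP_filter_pos_left {l : List ℕ} (hl : l.Pairwise (· ≥ ·)) (m : List ℕ) :
    dP (l.filter (0 < ·)) m = dP l m := by
  obtain ⟨t, ht⟩ := exists_eq_filter_pos_append_replicate_zero hl
  conv_rhs => rw [ht, dP_append_replicate_zero]

lemma tauP_eq_cons {N : ℕ} {l : List ℕ} (h : l.length + 1 < N) :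
    tauP N l = (N - l.length - 1) :: (l.map (· - 1)).filter (0 < ·) :=
  List.filter_cons_of_pos (by simp; omega)

lemma sum_tauP {N : ℕ} {l : List ℕ} (hl : 0 ∉ l) (hN : l.length < N) :
    ((tauP N l).sum : ℤ) = N - 1 - 2 * l.length + l.sum := by
  rw [tauP, sum_filter_pos, List.sum_cons, Nat.cast_add, sum_map_sub_one hl]
  omega

theorem dP_tauP_tauP {N : ℕ} {l m : List ℕ} (hl : l.Pairwise (· ≥ ·)) (hm : m.Pairwise (· ≥ ·))
    (hl0 : 0 ∉ l) (hm0 : 0 ∉ m) (hlN : l.length + 1 < N) (hmN : m.length + 1 < N) :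
    dP (tauP N l) (tauP N m) = dP l m := by
  have hl' : (l.map (· - 1)).Pairwise (· ≥ ·) := hl.map _ fun _ _ h => Nat.sub_le_sub_right h 1
  have hm' : (m.map (· - 1)).Pairwise (· ≥ ·) := hm.map _ fun _ _ h => Nat.sub_le_sub_right h 1
  rw [tauP_eq_cons hlN, tauP_eq_cons hmN, dP_cons, dP_filter_pos_left hl', dP_comm,
    dP_filter_pos_left hm', dP_comm, dP_map_sub_one hl0 hm0]
  omega

def countdown (c n : ℕ) : List ℕ := (List.range n).map (c - ·)

@[simp] lemma countdown_zero (c : ℕ) : countdown c 0 = [] := rfl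

@[simp] lemma length_countdown (c n : ℕ) : (countdown c n).length = n := by simp [countdown]

lemma countdown_succ (c n : ℕ) : countdown c (n + 1) = countdown c n ++ [c - n] := by
  simp [countdown, List.range_succ]

lemma countdown_eq_cons {c n : ℕ} (hn : 0 < n) :
    countdown c n = c :: countdown (c - 1) (n - 1) := by
  obtain ⟨n, rfl⟩ := Nat.exists_eq_add_of_lt hn
  simp [countdown, List.range_succ_eq_map, Function.comp_def]
  omega

lemma mem_countdown {c n x : ℕ} : x ∈ countdown c n ↔ ∃ t < n, c - t = x := by
  simp [countdown]

@[simp] lemma map_sub_one_countdown (c n : ℕ) :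
    (countdown c n).map (· - 1) = countdown (c - 1) n := by
  simp only [countdown, List.map_map]
  exact List.map_congr_left fun t _ => by simp; omega

@[simp] lemma filter_pos_countdown (c n : ℕ) :
    (countdown c n).filter (0 < ·) = countdown c (min c n) := by
  induction n with
  | zero => simp
  | succ n ih =>
    rw [countdown_succ, List.filter_append, ih]
    rcases Nat.lt_or_ge n c with h | h
    · simp [Nat.min_eq_right h.le, countdown_succ, h]
    · simp [Nat.min_eq_left h, Nat.min_eq_left (Nat.le_succ_of_le h), Nat.sub_eq_zero_of_le h]

lemma pairwise_countdown (c n : ℕ) : (countdown c n).Pairwise (· ≥ ·) :=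
  List.pairwise_lt_range.map _ fun _ _ _ => by omega

@[simp] lemma getElem_countdown (c n i : ℕ) (h : i < (countdown c n).length) :
    (countdown c n)[i] = c - i := by
  simp [countdown]

section Orbit

def alpha (k r : ℕ) : List ℕ :=
  if r ≤ k then countdown (k + 1) r ++ countdown (k - 1 - r) (k - 1 - r)
  else countdown (k - 1) (r - k - 1) ++ [2 * k + 1 - r, 2 * k + 1 - r] ++
    countdown (2 * k - r) (2 * k - r)

variable {k r : ℕ}

lemma alpha_of_le (h : r ≤ k) :
    alpha k r = countdown (k + 1) r ++ countdown (k - 1 - r) (k - 1 - r) := if_pos h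

lemma alpha_of_lt (h : k < r) :
    alpha k r = countdown (k - 1) (r - k - 1) ++ [2 * k + 1 - r, 2 * k + 1 - r] ++
      countdown (2 * k - r) (2 * k - r) := if_neg (by omega)

lemma tauP_alpha (hr : r < 2 * k) : tauP (2 * k + 1) (alpha k r) = alpha k (r + 1) := by
  rcases Nat.lt_trichotomy r k with h | h | h
  · rw [alpha_of_le h.le, alpha_of_le h, tauP_eq_cons (by simp; omega),
      countdown_eq_cons (n := r + 1) (by omega)]
    simp only [List.map_append, List.filter_append, map_sub_one_countdown, filter_pos_countdown,
      List.length_append, length_countdown, List.cons_append]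
    grind
  · subst r
    rw [alpha_of_le le_rfl, alpha_of_lt (by omega), tauP_eq_cons (by simp; omega),
      show k - 1 - k = 0 by omega, show k + 1 - k - 1 = 0 by omega]
    simp only [countdown_zero, List.append_nil, List.nil_append, map_sub_one_countdown,
      filter_pos_countdown, length_countdown, min_self, Nat.add_sub_cancel]
    rw [countdown_eq_cons (c := k) (by omega)]
    grind
  · have ha : 0 < 2 * k + 1 - r - 1 := by omega
    rw [alpha_of_lt h, alpha_of_lt (by omega), tauP_eq_cons (by simp; omega),
      countdown_eq_cons (n := r + 1 - k - 1) (by omega)]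
    simp only [List.map_append, List.filter_append, map_sub_one_countdown, filter_pos_countdown,
      List.length_append, length_countdown, List.cons_append, List.map_cons, List.map_nil,
      List.filter_cons, ha, decide_true, if_true, List.filter_nil, List.length_cons,
      List.length_nil]
    grind

lemma length_alpha (hr : r ≤ 2 * k) :
    (alpha k r).length = if r < k then k - 1 else if r = k then k else k + 1 := by
  by_cases h : r ≤ k
  · rw [alpha_of_le h]
    split_ifs <;> simp <;> omega
  · rw [alpha_of_lt (by omega)]
    split_ifs <;> simp <;> omega

lemma length_alpha_lt (hr : r < 2 * k) : (alpha k r).length < 2 * k := by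
  rw [length_alpha hr.le]
  split_ifs <;> omega

lemma zero_not_mem_alpha (hr : r ≤ 2 * k) : 0 ∉ alpha k r := by
  by_cases h : r ≤ k
  · rw [alpha_of_le h]
    simp only [List.mem_append, mem_countdown]
    rintro (⟨t, ht, h0⟩ | ⟨t, ht, h0⟩) <;> omega
  · rw [alpha_of_lt (by omega)]
    simp only [List.mem_append, mem_countdown, List.mem_cons, List.not_mem_nil]
    rintro ((⟨t, ht, h0⟩ | h0 | h0 | h0) | ⟨t, ht, h0⟩) <;> omega

lemma pairwise_alpha (k r : ℕ) : (alpha k r).Pairwise (· ≥ ·) := by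
  by_cases h : r ≤ k
  · rw [alpha_of_le h]
    simp only [List.pairwise_append, pairwise_countdown, mem_countdown, true_and]
    rintro _ ⟨t, ht, rfl⟩ _ ⟨u, hu, rfl⟩
    omega
  · rw [alpha_of_lt (by omega)]
    simp only [ge_iff_le, List.append_assoc, List.cons_append, List.nil_append,
      List.pairwise_append, pairwise_countdown, List.pairwise_cons, List.mem_cons, mem_countdown,
      forall_eq_or_imp, Std.le_refl, forall_exists_index, and_imp, forall_apply_eq_imp_iff₂,
      tsub_le_iff_right, true_and, and_true, and_self, or_self_left, Order.add_one_le_iff]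
    exact ⟨fun _ _ => by omega, fun _ _ => ⟨by omega, fun _ _ => by omega⟩⟩

lemma le_getElem_alpha (hr : r ≤ 2 * k) {i : ℕ} (h : i < (alpha k r).length) :
    k - 1 - i ≤ (alpha k r)[i] := by
  by_cases hrk : r ≤ k
  · simp only [alpha_of_le hrk, List.getElem_append, getElem_countdown, length_countdown]
    split_ifs <;> omega
  · simp only [alpha_of_lt (not_le.1 hrk), List.getElem_append, getElem_countdown,
      length_countdown, List.length_append, List.length_cons, List.length_nil]
    split_ifs with h₁ h₂
    · omega
    · obtain h₃ | h₃ : i - (r - k - 1) = 0 ∨ i - (r - k - 1) = 1 := by omega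
      all_goals
        simp only [h₃, List.getElem_cons_zero, List.getElem_cons_succ]
        omega
    · omega

lemma alpha_zero (k : ℕ) : alpha k 0 = staircase (k - 1) := by
  simp [alpha_of_le, staircase, countdown]

lemma sum_alpha (hr : r ≤ 2 * k) :
    ((alpha k r).sum : ℤ) = (alpha k 0).sum + 2 * min (r : ℤ) (2 * k + 1 - r) := by
  induction r with
  | zero => omega
  | succ r ih =>
    have hlen := length_alpha_lt (show r < 2 * k by omega)
    rw [← tauP_alpha (by omega), sum_tauP (zero_not_mem_alpha (by omega)) (by omega),
      ih (by omega), length_alpha (by omega)]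
    split_ifs <;> push_cast <;> omega

lemma zipWith_min_alpha_zero (hr : r ≤ 2 * k) :
    (alpha k 0).zipWith min (alpha k r) = alpha k 0 := by
  refine zipWith_min_eq_left ?_ fun i _ h => ?_
  · rw [length_alpha hr, length_alpha (Nat.zero_le _)]
    split_ifs <;> omega
  · simpa [alpha_zero, staircase, countdown] using le_getElem_alpha hr h

lemma dP_alpha_zero (hr : r ≤ 2 * k) :
    dP (alpha k 0) (alpha k r) = 2 * min (r : ℤ) (2 * k + 1 - r) := by
  rw [dP_eq_sub_of_zipWith_min_eq (zipWith_min_alpha_zero hr), sum_alpha hr]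
  ring

lemma iterate_tauP_staircase (hr : r ≤ 2 * k) :
    (tauP (2 * k + 1))^[r] (staircase (k - 1)) = alpha k r := by
  induction r with
  | zero => exact (alpha_zero k).symm
  | succ r ih => rw [Function.iterate_succ_apply', ih (by omega), tauP_alpha (by omega)]

lemma dP_alpha_add (i d : ℕ) (h : i + d ≤ 2 * k) :
    dP (alpha k i) (alpha k (i + d)) = dP (alpha k 0) (alpha k d) := by
  induction i with
  | zero => rw [Nat.zero_add]
  | succ i ih =>
    have hlen := length_alpha_lt (show i < 2 * k by omega)
    have hlen' := length_alpha_lt (show i + d < 2 * k by omega)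
    rw [← ih (by omega), Nat.add_right_comm, ← tauP_alpha (by omega),
      ← tauP_alpha (by omega), dP_tauP_tauP (pairwise_alpha k i) (pairwise_alpha k (i + d))
        (zero_not_mem_alpha (by omega)) (zero_not_mem_alpha (by omega)) (by omega) (by omega)]

end Orbit

theorem odd_cycle_metric_general (k : ℕ) (i j : ℕ)
    (hi : i ≤ 2 * k) (hj : j ≤ 2 * k) :
    dP ((tauP (2 * k + 1))^[i] (staircase (k - 1)))
       ((tauP (2 * k + 1))^[j] (staircase (k - 1)))
      = 2 * min (((j : ℤ) - i).natAbs : ℤ)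
          ((2 * k + 1 : ℤ) - (((j : ℤ) - i).natAbs : ℤ)) := by
  rw [iterate_tauP_staircase hi, iterate_tauP_staircase hj]
  rcases le_total i j with h | h
  · obtain ⟨d, rfl⟩ := Nat.exists_eq_add_of_le h
    rw [dP_alpha_add i d hj, dP_alpha_zero (by omega)]
    omega
  · obtain ⟨d, rfl⟩ := Nat.exists_eq_add_of_le h
    rw [dP_comm, dP_alpha_add j d hi, dP_alpha_zero (by omega)]
    omega

theorem odd_cycle_metric (k : ℕ) (hk : 1 ≤ k) (i j : ℕ)
    (hi : i ≤ 2 * k) (hj : j ≤ 2 * k) :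
    dP ((tauP (2 * k + 1))^[i] (staircase (k - 1)))
       ((tauP (2 * k + 1))^[j] (staircase (k - 1)))
      = 2 * min (((j : ℤ) - i).natAbs : ℤ)
          ((2 * k + 1 : ℤ) - (((j : ℤ) - i).natAbs : ℤ)) :=
  odd_cycle_metric_general k i j hi hj
end

section
/- Let S = [[1,1,0],[t,t,1],[t,t,t]] over ℚ(t) and q a formal variable. Then the generating function of traces satisfies Σ_{k≥0} tr(S^k)·q^k = (3 - (2+4t)q + t²q²)/(1 - (1+2t)q + t²q²) as formal power series in q over ℚ(t). -/
open Polynomial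

noncomputable def Smat : Matrix (Fin 3) (Fin 3) (Polynomial ℤ) :=
  !![1, 1, 0; X, X, 1; X, X, X]

/-!
The characteristic polynomial of `S` is `λ³ - (1 + 2t) λ² + t² λ` (its constant term `det S`
vanishes because two columns of `S` coincide), so by Cayley–Hamilton the traces satisfy
`tr S^(k+3) = (1 + 2t) tr S^(k+2) - t² tr S^(k+1)`. Multiplying the series by
`1 - (1 + 2t) q + t² q²` therefore kills every coefficient beyond `q²`, and the three remaining
ones are read off from `tr S⁰ = 3`, `tr S = 1 + 2t` and `tr S² = 1 + 4t + 2t²`.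
-/

theorem PowerSeries.mk_mul_one_sub_C_mul_X_add_C_mul_X_sq {R : Type*} [CommRing R]
    {a : ℕ → R} {c d : R} (h : ∀ n, a (n + 3) = c * a (n + 2) - d * a (n + 1)) :
    mk a * (1 - C c * PowerSeries.X + C d * PowerSeries.X ^ 2) =
      C (a 0) + C (a 1 - c * a 0) * PowerSeries.X
        + C (a 2 - c * a 1 + d * a 0) * PowerSeries.X ^ 2 := by
  ext n
  rcases n with _ | _ | _ | n <;>
    simp [mul_add, mul_sub, mul_left_comm _ (C _), coeff_mul_X_pow', h]

theorem pow_add_three_eq_of_pow_three_eq {R A : Type*} [CommRing R] [Ring A] [Algebra R A]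
    {x : A} {c d : R} (hx : x ^ 3 = c • x ^ 2 - d • x) (k : ℕ) :
    x ^ (k + 3) = c • x ^ (k + 2) - d • x ^ (k + 1) := by
  rw [pow_add, hx, mul_sub, mul_smul_comm, mul_smul_comm, ← pow_add, ← pow_succ]

theorem Matrix.trace_pow_add_three {n R : Type*} [Fintype n] [DecidableEq n] [CommRing R]
    {M : Matrix n n R} {c d : R} (hM : M ^ 3 = c • M ^ 2 - d • M) (k : ℕ) :
    trace (M ^ (k + 3)) = c * trace (M ^ (k + 2)) - d * trace (M ^ (k + 1)) := by
  rw [pow_add_three_eq_of_pow_three_eq hM, trace_sub, trace_smul, trace_smul, smul_eq_mul,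
    smul_eq_mul]

theorem Smat_pow_three : Smat ^ 3 = (1 + 2 * X : ℤ[X]) • Smat ^ 2 - (X ^ 2 : ℤ[X]) • Smat := by
  ext i j : 1
  fin_cases i <;> fin_cases j <;>
    simp [Smat, pow_succ, Matrix.mul_apply, Fin.sum_univ_three] <;> ring

theorem trace_Smat : Smat.trace = 1 + 2 * X := by
  simp [Smat, Matrix.trace_fin_three]
  ring

theorem trace_Smat_pow_two : (Smat ^ 2).trace = 1 + 4 * X + 2 * X ^ 2 := by
  simp [Smat, pow_two, Matrix.trace_fin_three]
  ring

/-- Σ_{k≥0} tr(S^k) q^k = (3 - (2+4t)q + t²q²)/(1 - (1+2t)q + t²q²), stated with the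
denominator (a unit in the power series ring) cleared. -/
theorem trace_generating_series :
    (PowerSeries.mk fun n => Matrix.trace (Smat ^ n)) *
        (1 - (PowerSeries.C : Polynomial ℤ →+* PowerSeries (Polynomial ℤ)) (1 + 2 * X) * PowerSeries.X
           + (PowerSeries.C : Polynomial ℤ →+* PowerSeries (Polynomial ℤ)) (X ^ 2) * PowerSeries.X ^ 2)
      = 3 - (PowerSeries.C : Polynomial ℤ →+* PowerSeries (Polynomial ℤ)) (2 + 4 * X) * PowerSeries.X
          + (PowerSeries.C : Polynomial ℤ →+* PowerSeries (Polynomial ℤ)) (X ^ 2) * PowerSeries.X ^ 2 := by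
  rw [PowerSeries.mk_mul_one_sub_C_mul_X_add_C_mul_X_sq (Matrix.trace_pow_add_three Smat_pow_three)]
  simp only [pow_zero, pow_one, Matrix.trace_one, Fintype.card_fin, Nat.cast_ofNat, trace_Smat,
    trace_Smat_pow_two]
  rw [show (1 + 2 * X - (1 + 2 * X) * 3 : ℤ[X]) = -(2 + 4 * X) by ring,
    show (1 + 4 * X + 2 * X ^ 2 - (1 + 2 * X) * (1 + 2 * X) + X ^ 2 * 3 : ℤ[X]) = X ^ 2 by ring,
    map_neg, map_ofNat, neg_mul, ← sub_eq_add_neg]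
end

section
/- For odd N = 2k+1 ≥ 3, substituting t = 1 gives Σ_{s=0}^{k} (N/(N-s))·C(N-s, s)·2^s = 2^N - 1; that is, the total number of nonempty faces of the injective hull of the N-cycle is 2^N - 1. -/
/-! The coefficient `N/(N-s)·C(N-s,s)` equals `2·C(N-s,s) - C(N-1-s,s)`, and by Pascal's rule
`Σ_s C(n-s,s)·2^s` satisfies the Jacobsthal recurrence `J (n+2) = J (n+1) + 2 J n`, so it is the
Jacobsthal number `J (n+1)`. The face count is therefore the Jacobsthal–Lucas number
`2 J (N+1) - J N = 2^N + (-1)^N`, which is `2^N - 1` for odd `N`. -/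

open Finset

def jacobsthal : ℕ → ℕ
  | 0 => 0
  | 1 => 1
  | n + 2 => jacobsthal (n + 1) + 2 * jacobsthal n

theorem jacobsthal_succ_add_jacobsthal (n : ℕ) : jacobsthal (n + 1) + jacobsthal n = 2 ^ n := by
  induction n with
  | zero => rfl
  | succ n ih => rw [jacobsthal, pow_succ, ← ih]; ring

theorem jacobsthal_succ_sub_two_mul (n : ℕ) :
    (jacobsthal (n + 1) : ℤ) - 2 * jacobsthal n = (-1) ^ n := by
  induction n with
  | zero => rfl
  | succ n ih => rw [jacobsthal, pow_succ, ← ih]; push_cast; ring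

theorem two_mul_jacobsthal_succ_sub_jacobsthal (n : ℕ) :
    2 * (jacobsthal (n + 1) : ℤ) - jacobsthal n = 2 ^ n + (-1) ^ n := by
  have h := jacobsthal_succ_add_jacobsthal n
  zify at h
  linear_combination h + jacobsthal_succ_sub_two_mul n

theorem jacobsthal_succ_eq_sum_antidiagonal :
    ∀ n, jacobsthal (n + 1) = ∑ p ∈ antidiagonal n, p.1.choose p.2 * 2 ^ p.2 :=
  Nat.twoStepInduction rfl rfl fun n h1 h2 => by
    rw [jacobsthal, h1, h2, Nat.antidiagonal_succ_succ', Nat.antidiagonal_succ']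
    simp [Nat.choose_succ_succ, sum_add_distrib, mul_sum, pow_succ, add_mul, mul_comm,
      mul_left_comm, add_comm, add_left_comm]

theorem sum_range_choose_mul_two_pow {n m : ℕ} (h : n < 2 * m) :
    ∑ s ∈ range m, (n - s).choose s * 2 ^ s = jacobsthal (n + 1) := by
  have hvanish : ∀ s, n < 2 * s → (n - s).choose s * 2 ^ s = 0 := fun s hs => by
    rw [Nat.choose_eq_zero_of_lt (by omega), zero_mul]
  rw [jacobsthal_succ_eq_sum_antidiagonal, ← Nat.sum_antidiagonal_swap]
  simp only [Prod.fst_swap, Prod.snd_swap]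
  rw [Nat.sum_antidiagonal_eq_sum_range_succ fun i j => j.choose i * 2 ^ i]
  rcases le_total m (n + 1) with hle | hle
  · exact sum_subset (range_subset_range.2 hle) fun s _ hs => hvanish s (by rw [mem_range, not_lt] at hs; omega)
  · exact (sum_subset (range_subset_range.2 hle) fun s _ hs => hvanish s (by rw [mem_range, not_lt] at hs; omega)).symm

theorem add_one_mul_choose_add_mul_add_one_choose (m s : ℕ) :
    (m + 1) * m.choose s + s * (m + 1).choose s = (m + 1) * (m + 1).choose s := by
  cases s with
  | zero => simp
  | succ s =>
    have h := Nat.add_one_mul_choose_eq m s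
    rw [Nat.choose_succ_succ'] at h ⊢
    linarith

theorem mul_choose_add_sub_mul_choose (n s : ℕ) :
    n * (n - s).choose s + (n - s) * (n - 1 - s).choose s = 2 * (n - s) * (n - s).choose s := by
  rcases lt_or_ge s n with hs | hs
  · obtain ⟨m, rfl⟩ : ∃ m, n = m + 1 + s := ⟨n - s - 1, by omega⟩
    have h := add_one_mul_choose_add_mul_add_one_choose m s
    rw [show m + 1 + s - s = m + 1 by omega, show m + 1 + s - 1 - s = m by omega]
    linarith
  · rcases Nat.eq_zero_or_pos s with rfl | hs0
    · simp_all
    · simp [Nat.sub_eq_zero_of_le hs, Nat.choose_eq_zero_of_lt hs0]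

theorem sub_dvd_mul_choose (n s : ℕ) : n - s ∣ n * (n - s).choose s := by
  refine (Nat.dvd_add_left (dvd_mul_right (n - s) ((n - 1 - s).choose s))).mp ?_
  rw [mul_choose_add_sub_mul_choose, mul_comm 2, mul_assoc]
  exact dvd_mul_right _ _

theorem natCast_mul_choose_div_sub {n : ℕ} (hn : 0 < n) (s : ℕ) :
    ((n * (n - s).choose s / (n - s) : ℕ) : ℤ)
      = 2 * (n - s).choose s - (n - 1 - s).choose s := by
  rcases lt_or_ge s n with hs | hs
  · have h : (n * (n - s).choose s : ℤ)
        = (n - s : ℕ) * (2 * (n - s).choose s - (n - 1 - s).choose s) := by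
      have h := congrArg ((↑) : ℕ → ℤ) (mul_choose_add_sub_mul_choose n s)
      push_cast at h
      linear_combination h
    rw [Int.natCast_div, Nat.cast_mul, h, Int.mul_ediv_cancel_left _ (by omega)]
  · simp [Nat.sub_eq_zero_of_le hs, Nat.choose_eq_zero_of_lt (show 0 < s by omega),
      show n - 1 - s = 0 by omega]

theorem natCast_sum_range_mul_choose_div_sub_mul_two_pow {n m : ℕ} (hn : 0 < n)
    (hm : n < 2 * m) :
    ((∑ s ∈ range m, n * (n - s).choose s / (n - s) * 2 ^ s : ℕ) : ℤ) = 2 ^ n + (-1) ^ n := by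
  have hJ₁ := sum_range_choose_mul_two_pow hm
  have hJ₀ := sum_range_choose_mul_two_pow (n := n - 1) (m := m) (by omega)
  rw [Nat.sub_add_cancel hn] at hJ₀
  rw [← two_mul_jacobsthal_succ_sub_jacobsthal, ← hJ₁, ← hJ₀, Nat.cast_sum]
  simp_rw [Nat.cast_mul, natCast_mul_choose_div_sub hn, sub_mul, sum_sub_distrib]
  push_cast [mul_assoc, mul_sum]
  rfl

theorem total_face_count_general (k : ℕ) :
    (∀ s ≤ k, (2 * k + 1 - s) ∣ (2 * k + 1) * (2 * k + 1 - s).choose s) ∧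
    ∑ s ∈ Finset.range (k + 1),
        ((2 * k + 1) * (2 * k + 1 - s).choose s / (2 * k + 1 - s)) * 2 ^ s
      = 2 ^ (2 * k + 1) - 1 := by
  refine ⟨fun s _ => sub_dvd_mul_choose _ s, Nat.eq_sub_of_add_eq (Nat.cast_injective (R := ℤ) ?_)⟩
  rw [Nat.cast_add, natCast_sum_range_mul_choose_div_sub_mul_two_pow (by omega) (by omega),
    Odd.neg_one_pow (odd_two_mul_add_one k)]
  push_cast
  ring

/-- Σ_{s=0}^{k} (N/(N-s))·C(N-s,s)·2^s = 2^N - 1 for N = 2k+1 ≥ 3: the total number of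
nonempty faces of the injective hull of the N-cycle. -/
theorem total_face_count (k : ℕ) (hk : 1 ≤ k) :
    (∀ s ≤ k, (2 * k + 1 - s) ∣ (2 * k + 1) * (2 * k + 1 - s).choose s) ∧
    ∑ s ∈ Finset.range (k + 1),
        ((2 * k + 1) * (2 * k + 1 - s).choose s / (2 * k + 1 - s)) * 2 ^ s
      = 2 ^ (2 * k + 1) - 1 :=
  total_face_count_general k
end
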